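/- arXiv:1409.4444 — 3 statements merged into one kernel-verified Lean document; each statement's English description precedes it below -/
import Mathlib

section
/- The bilinear form on sl₂(Q) defined by (X, Y) = (x₁₁y₁₁ + x₁₂y₂₁ + x₂₁y₁₂ + x₂₂y₂₂)₀, where a₀ denotes the degree-(0,0) component of a ∈ Q with respect to the ℤ²-grading, is symmetric, nondegenerate, and invariant, i.e. ([a,b],c) = (a,[b,c]) for all a,b,c ∈ sl₂(Q). -/
attribute [local instance] LieRing.ofAssociativeRing

/-- The ring `R = k[t₁^{±1}, t₂^{±1}]` of Laurent polynomials in two variables. -/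
abbrev LaurentR (k : Type*) [Field k] : Type _ := AddMonoidAlgebra k (ℤ × ℤ)

/-- The variable `t₁ ∈ R`. -/
noncomputable def tOne (k : Type*) [Field k] : LaurentR k :=
  AddMonoidAlgebra.single ((1 : ℤ), (0 : ℤ)) 1

/-- The variable `t₂ ∈ R`. -/
noncomputable def tTwo (k : Type*) [Field k] : LaurentR k :=
  AddMonoidAlgebra.single ((0 : ℤ), (1 : ℤ)) 1

/-!
Write `B (a, b) = iᵃjᵇ`. Anticommutation of `i` and `j` gives `B p * B q = (-1)^(p₂q₁) B (p + q)`,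
so the degree-`0` coefficient `τ` is a nondegenerate trace on `Q`, and the form is
`(X, Y) = τ (tr (X Y))`; symmetry and invariance hold for every trace form on matrices. For
nondegeneracy, pairing `X ∈ sl₂(Q)` with the elementary matrices `q E₁₂`, `q E₂₁` and
`[a E₁₂, b E₂₁]` shows that `X = d · 1` with `τ (d [a, b]) = 0` for all `a, b`, while
`2 d = tr X ∈ [Q, Q]`. The span `[Q, Q]` has no coordinates in degrees `(2ℤ)²`, and
`τ (d [B p, B q]) = ±2 d_{-(p+q)}` for suitable `p` detects every other coordinate, so `d = 0`.
-/

theorem zpow_mul_zpow_of_mul_eq_mul {G : Type*} [Group G] {a b z : G} (hza : Commute z a)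
    (hzb : Commute z b) (h : b * a = z * (a * b)) (m n : ℤ) :
    b ^ n * a ^ m = z ^ (n * m) * (a ^ m * b ^ n) := by
  have hb : SemiconjBy b (a ^ m) (z ^ m * a ^ m) := by
    rw [← hza.mul_zpow]
    exact SemiconjBy.zpow_right (by rw [SemiconjBy, h, mul_assoc]) m
  have ha : SemiconjBy (a ^ m) b (z ^ (-m) * b) := by
    rw [SemiconjBy, mul_assoc, hb.eq, zpow_neg, ← mul_assoc, ← mul_assoc, inv_mul_cancel, one_mul]
  rw [(ha.zpow_right n).eq, (hzb.zpow_left (-m)).mul_zpow, ← zpow_mul, mul_assoc, ← mul_assoc,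
    ← zpow_add, show n * m + -m * n = 0 by ring, zpow_zero, one_mul]

theorem Units.val_neg_one_zpow {R : Type*} [Ring R] (n : ℤ) :
    (((-1 : Rˣ) ^ n : Rˣ) : R) = ((n.negOnePow : ℤ) : R) := by
  have h : Units.map (Int.castRingHom R : ℤ →* R) (-1) = -1 := Units.ext (by simp)
  rw [Int.negOnePow_def, ← h, ← map_zpow]
  rfl

theorem Int.cast_negOnePow_ne_zero {R : Type*} [Ring R] [Nontrivial R] (n : ℤ) :
    ((n.negOnePow : ℤ) : R) ≠ 0 :=
  (n.negOnePow.isUnit.map (Int.castRingHom R)).ne_zero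

theorem mul_eq_negOnePow_smul_of_anticomm {Q : Type*} [Ring Q] {u v : Qˣ}
    (huv : (v : Q) * u = -(u * v)) {e : ℤ × ℤ → Q}
    (he : ∀ a b : ℤ, e (a, b) = ((u ^ a * v ^ b : Qˣ) : Q)) (p q : ℤ × ℤ) :
    e p * e q = ((p.2 * q.1).negOnePow : ℤ) • e (p + q) := by
  have hvu : v * u = -1 * (u * v) := Units.ext (by simp [huv])
  have hcomm := Commute.neg_one_left u
  have hprod : u ^ p.1 * v ^ p.2 * (u ^ q.1 * v ^ q.2) =
      (-1) ^ (p.2 * q.1) * (u ^ (p.1 + q.1) * v ^ (p.2 + q.2)) := by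
    rw [mul_assoc, ← mul_assoc (v ^ p.2),
      zpow_mul_zpow_of_mul_eq_mul hcomm (Commute.neg_one_left v) hvu, zpow_add, zpow_add,
      ← mul_assoc, ← mul_assoc, ← (hcomm.zpow_zpow _ _).eq]
    group
  obtain ⟨p₁, p₂⟩ := p
  obtain ⟨q₁, q₂⟩ := q
  rw [he, he, Prod.mk_add_mk, he, ← Units.val_mul, hprod, Units.val_mul, Units.val_neg_one_zpow,
    zsmul_eq_mul]

section SignTwistedBasis

open Module

variable {k Q : Type*} [Field k] [Ring Q] [Algebra k Q] {B : Basis (ℤ × ℤ) k Q}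

theorem coord_basis_mul_basis
    (hB : ∀ p q, B p * B q = ((p.2 * q.1).negOnePow : ℤ) • B (p + q)) (m p q : ℤ × ℤ) :
    B.coord m (B p * B q) = if p + q = m then (((p.2 * q.1).negOnePow : ℤ) : k) else 0 := by
  rw [hB, map_zsmul, Basis.coord_apply, Basis.repr_self, Finsupp.single_apply]
  split_ifs <;> simp

theorem coord_mul_comm_of_even
    (hB : ∀ p q, B p * B q = ((p.2 * q.1).negOnePow : ℤ) • B (p + q)) {m : ℤ × ℤ}
    (hm₁ : Even m.1) (hm₂ : Even m.2) (a b : Q) :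
    B.coord m (a * b) = B.coord m (b * a) := by
  have hbil : (LinearMap.mul k Q).compr₂ (B.coord m) =
      (LinearMap.mul k Q).flip.compr₂ (B.coord m) := by
    refine LinearMap.ext_basis B B fun p q => ?_
    simp only [LinearMap.compr₂_apply, LinearMap.mul_apply', LinearMap.flip_apply]
    rw [coord_basis_mul_basis hB, coord_basis_mul_basis hB, add_comm q p]
    split_ifs with h
    · obtain rfl : q = m - p := eq_sub_of_add_eq' h
      congr 2
      rw [Int.negOnePow_eq_iff]
      simp only [Prod.fst_sub, Prod.snd_sub, Int.even_sub, Int.even_mul, hm₁, hm₂]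
      tauto
    · rfl
  exact LinearMap.congr_fun₂ hbil a b

theorem coord_zero_mul_basis_neg
    (hB : ∀ p q, B p * B q = ((p.2 * q.1).negOnePow : ℤ) • B (p + q)) (a : Q) (m : ℤ × ℤ) :
    B.coord 0 (a * B (-m)) = (((m.1 * m.2).negOnePow : ℤ) : k) * B.coord m a := by
  have hlin : B.coord 0 ∘ₗ LinearMap.mulRight k (B (-m)) =
      (((m.1 * m.2).negOnePow : ℤ) : k) • B.coord m := by
    refine B.ext fun s => ?_
    simp only [LinearMap.comp_apply, LinearMap.mulRight_apply, LinearMap.smul_apply,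
      coord_basis_mul_basis hB, Basis.coord_apply, Basis.repr_self, Finsupp.single_apply,
      add_neg_eq_zero, smul_eq_mul]
    split_ifs with h
    · subst h
      rw [Prod.fst_neg, mul_neg, Int.negOnePow_neg, mul_comm, mul_one]
    · rw [mul_zero]
  exact LinearMap.congr_fun hlin a

theorem eq_zero_of_forall_coord_zero_mul_eq_zero
    (hB : ∀ p q, B p * B q = ((p.2 * q.1).negOnePow : ℤ) • B (p + q)) {a : Q}
    (ha : ∀ b, B.coord 0 (a * b) = 0) : a = 0 := by
  refine B.forall_coord_eq_zero_iff.mp fun m => ?_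
  have h := ha (B (-m))
  rw [coord_zero_mul_basis_neg hB] at h
  exact (mul_eq_zero.mp h).resolve_left (Int.cast_negOnePow_ne_zero _)

theorem coord_eq_zero_of_mem_derivedSeries
    (hB : ∀ p q, B p * B q = ((p.2 * q.1).negOnePow : ℤ) • B (p + q)) {c : Q}
    (hc : c ∈ LieAlgebra.derivedSeries k Q 1) {m : ℤ × ℤ} (hm₁ : Even m.1) (hm₂ : Even m.2) :
    B.coord m c = 0 := by
  replace hc : c ∈ Submodule.span k {⁅a, b⁆ | (a : Q) (b : Q)} := by
    rw [← LieAlgebra.coe_derivedSeries_one_eq]; exact hc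
  refine (Submodule.span_le (p := LinearMap.ker (B.coord m)) |>.mpr ?_) hc
  rintro _ ⟨a, b, rfl⟩
  rw [SetLike.mem_coe, LinearMap.mem_ker, Ring.lie_def, map_sub,
    coord_mul_comm_of_even hB hm₁ hm₂, sub_self]

theorem basis_lie_basis
    (hB : ∀ p q, B p * B q = ((p.2 * q.1).negOnePow : ℤ) • B (p + q)) (p q : ℤ × ℤ) :
    ⁅B p, B q⁆ = ((p.2 * q.1).negOnePow - (q.2 * p.1).negOnePow : ℤ) • B (p + q) := by
  rw [Ring.lie_def, hB, hB, add_comm q p, sub_smul]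

theorem coord_eq_zero_of_forall_coord_zero_mul_lie [NeZero (2 : k)]
    (hB : ∀ p q, B p * B q = ((p.2 * q.1).negOnePow : ℤ) • B (p + q)) {d : Q}
    (hd : ∀ a b : Q, B.coord 0 (d * ⁅a, b⁆) = 0) {m : ℤ × ℤ} (hm : ¬(Even m.1 ∧ Even m.2)) :
    B.coord m d = 0 := by
  -- `B (1, 0)` resp. `B (0, 1)` anticommutes with `B q` exactly when `q.2` resp. `q.1` is odd.
  obtain ⟨p, hp⟩ : ∃ p : ℤ × ℤ,
      (((p.2 * (-m - p).1).negOnePow - ((-m - p).2 * p.1).negOnePow : ℤ) : k) ≠ 0 := by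
    rcases not_and_or.mp hm with hm₁ | hm₂
    · refine ⟨(0, 1), ?_⟩
      rw [Int.not_even_iff_odd] at hm₁
      simp [Int.negOnePow_odd _ hm₁, two_ne_zero]
    · refine ⟨(1, 0), ?_⟩
      rw [Int.not_even_iff_odd] at hm₂
      simp [Int.negOnePow_odd _ hm₂, two_ne_zero]
  have h := hd (B p) (B (-m - p))
  rw [basis_lie_basis hB, add_sub_cancel, mul_smul_comm, map_zsmul, coord_zero_mul_basis_neg hB,
    zsmul_eq_mul] at h
  exact (mul_eq_zero.mp ((mul_eq_zero.mp h).resolve_left hp)).resolve_left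
    (Int.cast_negOnePow_ne_zero _)

theorem eq_zero_of_mem_derivedSeries_of_forall_coord_zero_mul_lie [NeZero (2 : k)]
    (hB : ∀ p q, B p * B q = ((p.2 * q.1).negOnePow : ℤ) • B (p + q)) {d : Q}
    (hdC : d ∈ LieAlgebra.derivedSeries k Q 1) (hd : ∀ a b : Q, B.coord 0 (d * ⁅a, b⁆) = 0) :
    d = 0 :=
  B.forall_coord_eq_zero_iff.mp fun m =>
    if hm : Even m.1 ∧ Even m.2 then coord_eq_zero_of_mem_derivedSeries hB hdC hm.1 hm.2
    else coord_eq_zero_of_forall_coord_zero_mul_lie hB hd hm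

end SignTwistedBasis

section TraceForm

open Matrix

variable {k A n : Type*} [Field k] [Ring A] [Algebra k A] [Fintype n]

theorem map_trace_mul_comm (τ : A →ₗ[k] k) (hτ : ∀ a b, τ (a * b) = τ (b * a))
    (X Y : Matrix n n A) : τ (X * Y).trace = τ (Y * X).trace := by
  simp only [trace, diag, mul_apply, map_sum, hτ (X _ _)]
  exact Finset.sum_comm

theorem map_trace_lie_mul (τ : A →ₗ[k] k) (hτ : ∀ a b, τ (a * b) = τ (b * a))
    (X Y Z : Matrix n n A) : τ (⁅X, Y⁆ * Z).trace = τ (X * ⁅Y, Z⁆).trace := by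
  rw [Ring.lie_def, Ring.lie_def, Matrix.sub_mul, Matrix.mul_sub, trace_sub, trace_sub, map_sub,
    map_sub, Matrix.mul_assoc, Matrix.mul_assoc, map_trace_mul_comm τ hτ Y (X * Z),
    Matrix.mul_assoc]

variable [DecidableEq n]

theorem lie_mem_derivedSeries_one {L : Type*} [LieRing L] [LieAlgebra k L] (x y : L) :
    ⁅x, y⁆ ∈ LieAlgebra.derivedSeries k L 1 := by
  have h : ⁅x, y⁆ ∈ Submodule.span k {⁅a, b⁆ | (a : L) (b : L)} := Submodule.subset_span ⟨x, y, rfl⟩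
  rwa [← LieAlgebra.coe_derivedSeries_one_eq] at h

theorem trace_mem_derivedSeries_one {X : Matrix n n A}
    (hX : X ∈ LieAlgebra.derivedSeries k (Matrix n n A) 1) :
    X.trace ∈ LieAlgebra.derivedSeries k A 1 := by
  replace hX : X ∈ Submodule.span k {⁅Y, Z⁆ | (Y : Matrix n n A) (Z : Matrix n n A)} := by
    rw [← LieAlgebra.coe_derivedSeries_one_eq]; exact hX
  induction hX using Submodule.span_induction with
  | mem _ h =>
    obtain ⟨Y, Z, rfl⟩ := h
    have htr : ⁅Y, Z⁆.trace = ∑ i, ∑ j, ⁅Y i j, Z j i⁆ := by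
      rw [Ring.lie_def, trace_sub]
      simp only [trace, diag, mul_apply, Ring.lie_def, Finset.sum_sub_distrib]
      rw [Finset.sum_comm (f := fun i j => Z i j * Y j i)]
    rw [htr]
    exact Submodule.sum_mem _ fun i _ => Submodule.sum_mem _ fun j _ =>
      lie_mem_derivedSeries_one _ _
  | zero => simp
  | add _ _ _ _ hY hZ => rw [trace_add]; exact add_mem hY hZ
  | smul c _ _ hY => rw [trace_smul]; exact (LieAlgebra.derivedSeries k A 1).smul_mem c hY

theorem eq_zero_of_mem_derivedSeries_of_forall_map_trace_mul_eq_zero [Nontrivial n]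
    [NeZero (Fintype.card n : k)] (τ : A →ₗ[k] k) (hτ : ∀ a, (∀ b, τ (a * b) = 0) → a = 0)
    (hA : ∀ d ∈ LieAlgebra.derivedSeries k A 1, (∀ a b : A, τ (d * ⁅a, b⁆) = 0) → d = 0)
    {X : Matrix n n A} (hX : X ∈ LieAlgebra.derivedSeries k (Matrix n n A) 1)
    (hXY : ∀ Y ∈ LieAlgebra.derivedSeries k (Matrix n n A) 1, τ (X * Y).trace = 0) :
    X = 0 := by
  have hoff : ∀ i j, i ≠ j → X i j = 0 := fun i j hij => hτ _ fun b => by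
    have h := hXY _ (lie_mem_derivedSeries_one (single j i b) (single i i 1))
    rwa [Ring.lie_def, single_mul_single_same, mul_one, single_mul_single_of_ne (h := hij),
      sub_zero, trace_mul_single, op_smul_eq_mul] at h
  have hbracket : ∀ i j, i ≠ j → ∀ a b : A, τ (X i i * (a * b) - X j j * (b * a)) = 0 := by
    intro i j hij a b
    have h := hXY _ (lie_mem_derivedSeries_one (single i j a) (single j i b))
    rwa [Ring.lie_def, single_mul_single_same, single_mul_single_same, Matrix.mul_sub, trace_sub,
      trace_mul_single, trace_mul_single, op_smul_eq_mul, op_smul_eq_mul] at h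
  have hdiag : ∀ i j, X i i = X j j := by
    intro i j
    rcases eq_or_ne i j with rfl | hij
    · rfl
    · exact sub_eq_zero.mp (hτ _ fun b => by simpa [sub_mul] using hbracket i j hij b 1)
  obtain ⟨i₀⟩ : Nonempty n := inferInstance
  obtain ⟨j₀, hj₀⟩ := exists_ne i₀
  set d := X i₀ i₀
  have hXd : X = diagonal fun _ => d := by
    ext i j
    rcases eq_or_ne i j with rfl | hij
    · rw [diagonal_apply_eq, hdiag i i₀]
    · rw [diagonal_apply_ne _ hij, hoff i j hij]
  have hdA : d ∈ LieAlgebra.derivedSeries k A 1 := by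
    have h := trace_mem_derivedSeries_one hX
    rw [hXd, trace_diagonal, Finset.sum_const, Finset.card_univ, ← Nat.cast_smul_eq_nsmul k] at h
    simpa [NeZero.ne] using (LieAlgebra.derivedSeries k A 1).smul_mem (Fintype.card n : k)⁻¹ h
  have hd : ∀ a b : A, τ (d * ⁅a, b⁆) = 0 := fun a b => by
    simpa [hdiag j₀ i₀, Ring.lie_def, mul_sub] using hbracket i₀ j₀ hj₀.symm a b
  rw [hXd, hA d hdA hd, diagonal_zero]

end TraceForm

theorem sl2_quaternion_form_symm_invariant_nondegenerate_general
    (k : Type*) [Field k] [CharZero k]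
    (Q : Type*) [Ring Q] [Algebra k Q]
    (i j : Q)
    (hij : i * j = -(j * i))
    (uI uJ : Qˣ) (huI : (uI : Q) = i) (huJ : (uJ : Q) = j)
    (B : Module.Basis (ℤ × ℤ) k Q)
    (hB : ∀ a b : ℤ, B (a, b) = ((uI ^ a * uJ ^ b : Qˣ) : Q))
    -- the bilinear form on `gl₂(Q)`:
    (Φ : Matrix (Fin 2) (Fin 2) Q → Matrix (Fin 2) (Fin 2) Q → k)
    (hΦ : ∀ X Y : Matrix (Fin 2) (Fin 2) Q,
      Φ X Y = (B.repr (X 0 0 * Y 0 0 + X 0 1 * Y 1 0 + X 1 0 * Y 0 1 + X 1 1 * Y 1 1))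
        ((0 : ℤ), (0 : ℤ))) :
    -- symmetric:
    (∀ X Y, Φ X Y = Φ Y X) ∧
    -- invariant:
    (∀ X Y Z, Φ ⁅X, Y⁆ Z = Φ X ⁅Y, Z⁆) ∧
    -- nondegenerate on `sl₂(Q) = [gl₂(Q), gl₂(Q)]`:
    (∀ X ∈ LieAlgebra.derivedSeries k (Matrix (Fin 2) (Fin 2) Q) 1,
      (∀ Y ∈ LieAlgebra.derivedSeries k (Matrix (Fin 2) (Fin 2) Q) 1, Φ X Y = 0) → X = 0) := by
  have hji : (uJ : Q) * uI = -(uI * uJ) := by rw [huI, huJ, hij, neg_neg]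
  have hBmul := mul_eq_negOnePow_smul_of_anticomm hji hB
  have hτ : ∀ a b : Q, B.coord 0 (a * b) = B.coord 0 (b * a) :=
    coord_mul_comm_of_even hBmul Even.zero Even.zero
  have hΦτ : ∀ X Y, Φ X Y = B.coord 0 (X * Y).trace := fun X Y => by
    rw [hΦ, Matrix.trace_fin_two]
    simp only [Matrix.mul_apply, Fin.sum_univ_two, Module.Basis.coord_apply]
    congr 2
    abel
  simp only [hΦτ]
  refine ⟨map_trace_mul_comm _ hτ, map_trace_lie_mul _ hτ, fun X hX => ?_⟩
  have : NeZero ((Fintype.card (Fin 2) : ℕ) : k) := by rw [Fintype.card_fin]; infer_instance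
  exact eq_zero_of_mem_derivedSeries_of_forall_map_trace_mul_eq_zero _
    (fun _ => eq_zero_of_forall_coord_zero_mul_eq_zero hBmul)
    (fun _ => eq_zero_of_mem_derivedSeries_of_forall_coord_zero_mul_lie hBmul) hX

/-- Let `Q = (t₁,t₂)` be the quaternion algebra over `R = k[t₁^{±1},t₂^{±1}]`, with its
`ℤ²`-grading `Q^{(a,b)} = k·iᵃjᵇ` (encoded by the `k`-basis `B` with `B(a,b) = iᵃjᵇ`),
and let `a₀ := (B.repr a) (0,0)` denote the degree-`(0,0)` component of `a ∈ Q`.  Then the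
bilinear form on `sl₂(Q) = [gl₂(Q), gl₂(Q)]` defined by
`(X,Y) = (x₁₁y₁₁ + x₁₂y₂₁ + x₂₁y₁₂ + x₂₂y₂₂)₀` is symmetric, invariant
(`([X,Y],Z) = (X,[Y,Z])`), and nondegenerate on `sl₂(Q)`. -/
theorem sl2_quaternion_form_symm_invariant_nondegenerate
    (k : Type*) [Field k] [IsAlgClosed k] [CharZero k]
    (Q : Type*) [Ring Q] [Algebra (LaurentR k) Q]
    [Algebra k Q] [IsScalarTower k (LaurentR k) Q]
    (i j : Q)
    (hi : i * i = algebraMap (LaurentR k) Q (tOne k))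
    (hj : j * j = algebraMap (LaurentR k) Q (tTwo k))
    (hij : i * j = -(j * i))
    (uI uJ : Qˣ) (huI : (uI : Q) = i) (huJ : (uJ : Q) = j)
    (B : Module.Basis (ℤ × ℤ) k Q)
    (hB : ∀ a b : ℤ, B (a, b) = ((uI ^ a * uJ ^ b : Qˣ) : Q))
    -- the bilinear form on `gl₂(Q)`:
    (Φ : Matrix (Fin 2) (Fin 2) Q → Matrix (Fin 2) (Fin 2) Q → k)
    (hΦ : ∀ X Y : Matrix (Fin 2) (Fin 2) Q,
      Φ X Y = (B.repr (X 0 0 * Y 0 0 + X 0 1 * Y 1 0 + X 1 0 * Y 0 1 + X 1 1 * Y 1 1))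
        ((0 : ℤ), (0 : ℤ))) :
    -- symmetric:
    (∀ X Y, Φ X Y = Φ Y X) ∧
    -- invariant:
    (∀ X Y Z, Φ ⁅X, Y⁆ Z = Φ X ⁅Y, Z⁆) ∧
    -- nondegenerate on `sl₂(Q) = [gl₂(Q), gl₂(Q)]`:
    (∀ X ∈ LieAlgebra.derivedSeries k (Matrix (Fin 2) (Fin 2) Q) 1,
      (∀ Y ∈ LieAlgebra.derivedSeries k (Matrix (Fin 2) (Fin 2) Q) 1, Φ X Y = 0) → X = 0) :=
  sl2_quaternion_form_symm_invariant_nondegenerate_general k Q i j hij uI uJ huI huJ B hB Φ hΦ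
end

section
/- Let L be a perfect Lie algebra over k and let E_c = L ⊕ C be the central extension of L by an abelian Lie algebra C via a 2-cocycle σ, with bracket [l₁⊕c₁, l₂⊕c₂] = [l₁,l₂]_L ⊕ σ(l₁,l₂). If T ∈ L is ad-diagonalizable on L (i.e. L is the direct sum of its ad(T)-eigenspaces over k), then T, viewed as the element T ⊕ 0 of E_c, is ad-diagonalizable on E_c. -/
/-!
`ad (ιL T)` is a derivation of `Ec` that lifts `ad T` up to central terms. Hence if `a`, `b` are
eigenvectors of `ad T` with eigenvalues `μ`, `ν`, the central errors die in the bracket and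
`⁅ιL a, ιL b⁆` is an honest eigenvector of `ad (ιL T)` with eigenvalue `μ + ν`. Since `L` is perfect
and spanned by eigenvectors, such brackets span `Ec` modulo the image of `C`, which is central and
so lies in the `0`-eigenspace.
-/

open LieAlgebra Module.End Submodule

section

variable {R L : Type*} [CommRing R] [LieRing L] [LieAlgebra R L]

theorem LieAlgebra.mem_eigenspace_zero_of_mem_center {x z : L} (hz : z ∈ center R L) :
    z ∈ eigenspace (ad R L x) 0 := by
  rw [mem_eigenspace_iff, ad_apply, zero_smul, (LieModule.mem_maxTrivSubmodule R L L z).mp hz]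

theorem LieAlgebra.lie_mem_eigenspace_add {x a b : L} {μ ν : R}
    (ha : ⁅x, a⁆ - μ • a ∈ center R L) (hb : ⁅x, b⁆ - ν • b ∈ center R L) :
    ⁅a, b⁆ ∈ eigenspace (ad R L x) (μ + ν) := by
  rw [LieModule.mem_maxTrivSubmodule] at ha hb
  have ha' : ⁅⁅x, a⁆, b⁆ = μ • ⁅a, b⁆ := by
    rw [← smul_lie, ← sub_eq_zero, ← sub_lie, ← lie_skew, ha, neg_zero]
  have hb' : ⁅a, ⁅x, b⁆⁆ = ν • ⁅a, b⁆ := by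
    rw [← lie_smul, ← sub_eq_zero, ← lie_sub, hb]
  rw [mem_eigenspace_iff, ad_apply, leibniz_lie, ha', hb', add_smul]

theorem LieAlgebra.span_image2_lie_eq_top {s : Set L} (hperf : derivedSeries R L 1 = ⊤)
    (hs : span R s = ⊤) : span R (Set.image2 (fun a b ↦ ⁅a, b⁆) s s) = ⊤ := by
  rw [derivedSeries_def, derivedSeriesOfIdeal_succ, derivedSeriesOfIdeal_zero] at hperf
  have hspan := LieSubmodule.lieIdeal_oper_eq_linear_span' (R := R) (L := L) (M := L) ⊤ ⊤
  rw [hperf, LieSubmodule.top_toSubmodule] at hspan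
  have hmap : map₂ (ad R L : L →ₗ[R] L →ₗ[R] L) (span R s) (span R s) =
      span R (Set.image2 (fun a b ↦ ⁅a, b⁆) s s) :=
    map₂_span_span ..
  rw [← hmap, hs, eq_top_iff]
  refine hspan.trans_le (span_le.mpr ?_)
  rintro _ ⟨x, -, y, -, rfl⟩
  exact apply_mem_map₂ _ trivial trivial

end

theorem ad_diagonalizable_lifts_to_central_extension_general
    (k L C Ec : Type*) [Field k]
    [LieRing L] [LieAlgebra k L] [AddCommGroup C] [Module k C]
    [LieRing Ec] [LieAlgebra k Ec]
    (σ : L →ₗ[k] L →ₗ[k] C)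
    -- `Ec` is `L ⊕ C` with the bracket `[l₁⊕c₁, l₂⊕c₂] = [l₁,l₂]_L ⊕ σ(l₁,l₂)`:
    (ιL : L →ₗ[k] Ec) (ιC : C →ₗ[k] Ec)
    (hsurj : ∀ x : Ec, ∃ (l : L) (c : C), x = ιL l + ιC c)
    (hbr : ∀ l₁ l₂ : L, ⁅ιL l₁, ιL l₂⁆ = ιL ⁅l₁, l₂⁆ + ιC (σ l₁ l₂))
    (hcentral : ∀ (c : C) (x : Ec), ⁅ιC c, x⁆ = 0)
    -- `L` is perfect:
    (hperf : LieAlgebra.derivedSeries k L 1 = ⊤)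
    (T : L)
    (hdiag : (⨆ μ : k, Module.End.eigenspace (LieAlgebra.ad k L T) μ) = ⊤) :
    (⨆ μ : k, Module.End.eigenspace (LieAlgebra.ad k Ec (ιL T)) μ) = ⊤ := by
  set S := ⨆ μ : k, eigenspace (ad k Ec (ιL T)) μ
  have hC (c : C) : ιC c ∈ center k Ec :=
    (LieModule.mem_maxTrivSubmodule k Ec Ec _).mpr fun x ↦ by rw [← lie_skew, hcentral, neg_zero]
  have hlift (μ : k) (a : L) (ha : a ∈ eigenspace (ad k L T) μ) :
      ⁅ιL T, ιL a⁆ - μ • ιL a ∈ center k Ec := by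
    rw [mem_eigenspace_iff, ad_apply] at ha
    rw [hbr, ha, map_smul, add_sub_cancel_left]
    exact hC _
  have hbrackets : span k (Set.image2 (fun a b ↦ ⁅a, b⁆) (⋃ μ, (eigenspace (ad k L T) μ : Set L))
      (⋃ μ, (eigenspace (ad k L T) μ : Set L))) ≤ S.comap ιL := by
    rw [span_le]
    rintro _ ⟨a, ha, b, hb, rfl⟩
    obtain ⟨μ, ha⟩ := Set.mem_iUnion.mp ha
    obtain ⟨ν, hb⟩ := Set.mem_iUnion.mp hb
    rw [SetLike.mem_coe, mem_comap, ← add_sub_cancel_right (ιL ⁅a, b⁆) (ιC (σ a b)), ← hbr]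
    exact S.sub_mem (mem_iSup_of_mem _ (lie_mem_eigenspace_add (hlift μ a ha) (hlift ν b hb)))
      (mem_iSup_of_mem 0 (mem_eigenspace_zero_of_mem_center (hC _)))
  rw [span_image2_lie_eq_top hperf (by rw [← iSup_eq_span, hdiag]), top_le_iff] at hbrackets
  refine eq_top_iff.mpr fun x _ ↦ ?_
  obtain ⟨l, c, rfl⟩ := hsurj x
  exact S.add_mem (hbrackets ▸ mem_top : l ∈ S.comap ιL)
    (mem_iSup_of_mem 0 (mem_eigenspace_zero_of_mem_center (hC c)))

/-- Let `L` be a perfect Lie algebra over a field `k` of characteristic 0 and let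
`E_c = L ⊕ C` be the central extension of `L` by an abelian Lie algebra `C` via a
2-cocycle `σ`, with bracket `[l₁⊕c₁, l₂⊕c₂] = [l₁,l₂]_L ⊕ σ(l₁,l₂)`.  If `T ∈ L` is
ad-diagonalizable on `L` (i.e. `L` is the sum of the eigenspaces of `ad T`), then `T`,
viewed as the element `T ⊕ 0` of `E_c`, is ad-diagonalizable on `E_c`. -/
theorem ad_diagonalizable_lifts_to_central_extension
    (k L C Ec : Type*) [Field k] [CharZero k]
    [LieRing L] [LieAlgebra k L] [AddCommGroup C] [Module k C]
    [LieRing Ec] [LieAlgebra k Ec]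
    (σ : L →ₗ[k] L →ₗ[k] C)
    (halt : ∀ a : L, σ a a = 0)
    (hcoc : ∀ a b c : L, σ ⁅a, b⁆ c + σ ⁅b, c⁆ a + σ ⁅c, a⁆ b = 0)
    -- `Ec` is `L ⊕ C` with the bracket `[l₁⊕c₁, l₂⊕c₂] = [l₁,l₂]_L ⊕ σ(l₁,l₂)`:
    (ιL : L →ₗ[k] Ec) (ιC : C →ₗ[k] Ec)
    (hindep : ∀ (l : L) (c : C), ιL l + ιC c = 0 → l = 0 ∧ c = 0)
    (hsurj : ∀ x : Ec, ∃ (l : L) (c : C), x = ιL l + ιC c)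
    (hbr : ∀ l₁ l₂ : L, ⁅ιL l₁, ιL l₂⁆ = ιL ⁅l₁, l₂⁆ + ιC (σ l₁ l₂))
    (hcentral : ∀ (c : C) (x : Ec), ⁅ιC c, x⁆ = 0)
    -- `L` is perfect:
    (hperf : LieAlgebra.derivedSeries k L 1 = ⊤)
    (T : L)
    (hdiag : (⨆ μ : k, Module.End.eigenspace (LieAlgebra.ad k L T) μ) = ⊤) :
    (⨆ μ : k, Module.End.eigenspace (LieAlgebra.ad k Ec (ιL T)) μ) = ⊤ :=
  ad_diagonalizable_lifts_to_central_extension_general k L C Ec σ ιL ιC hsurj hbr hcentral hperf T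
    hdiag
end

section
/- Let Q = (t₁,t₂) be the quaternion algebra over R = k[t₁^{±1},t₂^{±1}], and let S ∈ sl₂(Q) be the matrix of the Q-linear endomorphism of V = Q² acting as −1 on the non-free rank-1 projective module W = ker(m) and as +1 on a free complement U, and let P = a·diag(1,−1) with a ∈ k^×. Then S and P are not conjugate by any R-linear Lie algebra automorphism of sl₂(Q). -/
/-- The map `m : Q ⊕ Q → Q` of right `Q`-modules, `(u,v) ↦ (1+i)u − (1+j)v`. -/
noncomputable def mMap (Q : Type*) [Ring Q] (i j : Q) : (Q × Q) →ₗ[Qᵐᵒᵖ] Q where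
  toFun x := (1 + i) * x.1 - (1 + j) * x.2
  map_add' x y := by
    simp only [Prod.fst_add, Prod.snd_add, mul_add]
    abel
  map_smul' q x := by
    simp only [Prod.smul_fst, Prod.smul_snd, MulOpposite.smul_eq_mul_unop,
      RingHom.id_apply, mul_assoc, sub_mul]

attribute [local instance 100] LieRing.ofAssociativeRing

/-!
Transport the `sl₂`-triple `(P, a·E₁₂, E₂₁)` through the automorphism: this gives `E, F` with
`[S, E] = 2a·E`, `[S, F] = -2a·F`, `[E, F] = S`. As endomorphisms of `V = Q²`, `S` is the
reflection `s` with eigenspaces `W` (for `-1`) and `U` (for `1`), and `E`, `F` shift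
`s`-eigenvalues by `±2a`. Since `s` has no eigenvalues besides `±1`, either `a = ±1`, and then
`E` and `F` restrict to mutually inverse isomorphisms between `W` and `U`, or `E` and `F` kill
`W`, and then `W = 0` because `[E, F] = s` is `-1` on `W`. But `U ≅ V / W ≅ Q` because `m` is
onto (`(1+i)(1+j) - (1+j)(1+i) = 2ij` is a unit), so in both cases `W` would be free.
-/

/-- `IsSl2Triple` with the eigenvalues `±2` of `ad h` replaced by `±c`. -/
structure IsScaledSl2Triple {R L : Type*} [CommRing R] [LieRing L] [LieAlgebra R L]
    (c : R) (h e f : L) : Prop where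
  lie_e_f : ⁅e, f⁆ = h
  lie_h_e : ⁅h, e⁆ = c • e
  lie_h_f : ⁅h, f⁆ = (-c) • f

namespace IsScaledSl2Triple

variable {R L L' : Type*} [CommRing R] [LieRing L] [LieAlgebra R L] [LieRing L']
  [LieAlgebra R L'] {c : R} {h e f : L}

theorem map (t : IsScaledSl2Triple c h e f) (g : L →ₗ⁅R⁆ L') :
    IsScaledSl2Triple c (g h) (g e) (g f) where
  lie_e_f := by rw [← g.map_lie, t.lie_e_f]
  lie_h_e := by rw [← g.map_lie, t.lie_h_e, map_smul]
  lie_h_f := by rw [← g.map_lie, t.lie_h_f, map_smul]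

theorem of_map {g : L →ₗ⁅R⁆ L'} (hg : Function.Injective g)
    (t : IsScaledSl2Triple c (g h) (g e) (g f)) : IsScaledSl2Triple c h e f where
  lie_e_f := hg <| by rw [g.map_lie, t.lie_e_f]
  lie_h_e := hg <| by rw [g.map_lie, t.lie_h_e, map_smul]
  lie_h_f := hg <| by rw [g.map_lie, t.lie_h_f, map_smul]

theorem map_lieIdeal {I J : LieIdeal R L} (t : IsScaledSl2Triple c h e f) (φ : I →ₗ⁅R⁆ J)
    (hh : h ∈ I) (he : e ∈ I) (hf : f ∈ I) :
    IsScaledSl2Triple c (φ ⟨h, hh⟩ : L) (φ ⟨e, he⟩) (φ ⟨f, hf⟩) :=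
  ((of_map (g := I.incl) (h := ⟨h, hh⟩) (e := ⟨e, he⟩) (f := ⟨f, hf⟩) Subtype.val_injective
    t).map φ).map J.incl

theorem smul (t : IsScaledSl2Triple c h e f) (r : R) :
    IsScaledSl2Triple (r * c) (r • h) (r • e) f where
  lie_e_f := by rw [smul_lie, t.lie_e_f]
  lie_h_e := by
    rw [smul_lie, lie_smul, t.lie_h_e, smul_smul, smul_smul, smul_smul]
    congr 1
    ring
  lie_h_f := by rw [smul_lie, t.lie_h_f, smul_smul, mul_neg]

theorem neg_swap (t : IsScaledSl2Triple c h e f) : IsScaledSl2Triple (-c) h f (-e) where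
  lie_e_f := by rw [lie_neg, ← lie_skew, neg_neg, t.lie_e_f]
  lie_h_e := t.lie_h_f
  lie_h_f := by rw [lie_neg, t.lie_h_e, neg_neg, smul_neg]

theorem of_algebraMap {k : Type*} [Field k] [Algebra k R] [LieAlgebra k L]
    [IsScalarTower k R L] {c : k} (t : IsScaledSl2Triple (algebraMap k R c) h e f) :
    IsScaledSl2Triple c h e f where
  lie_e_f := t.lie_e_f
  lie_h_e := by rw [t.lie_h_e, algebraMap_smul]
  lie_h_f := by rw [t.lie_h_f, ← map_neg, algebraMap_smul]

theorem mem_derivedSeries (t : IsScaledSl2Triple c h e f) (hc : IsUnit c) :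
    e ∈ LieAlgebra.derivedSeries R L 1 ∧ f ∈ LieAlgebra.derivedSeries R L 1 := by
  have mem : ∀ x y : L, ⁅x, y⁆ ∈ LieAlgebra.derivedSeries R L 1 := fun x y =>
    LieSubmodule.lie_mem_lie (LieSubmodule.mem_top x) (LieSubmodule.mem_top y)
  obtain ⟨u, rfl⟩ := hc
  have he : e = (↑u⁻¹ : R) • ⁅h, e⁆ := by rw [t.lie_h_e, smul_smul, Units.inv_mul, one_smul]
  have hf : f = (-↑u⁻¹ : R) • ⁅h, f⁆ := by
    rw [t.lie_h_f, smul_smul, neg_mul_neg, Units.inv_mul, one_smul]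
  exact ⟨he ▸ Submodule.smul_mem _ _ (mem h e), hf ▸ Submodule.smul_mem _ _ (mem h f)⟩

end IsScaledSl2Triple

theorem Matrix.isScaledSl2Triple_standard {R A : Type*} [CommRing R] [Ring A] [Algebra R A] :
    IsScaledSl2Triple (L := Matrix (Fin 2) (Fin 2) A) (2 : R) !![1, 0; 0, -1]
      !![0, 1; 0, 0] !![0, 0; 1, 0] where
  lie_e_f := by ext i j; fin_cases i <;> fin_cases j <;> simp [Ring.lie_def]
  lie_h_e := by ext i j; fin_cases i <;> fin_cases j <;> simp [Ring.lie_def, two_smul]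
  lie_h_f := by
    ext i j; fin_cases i <;> fin_cases j <;> simp [Ring.lie_def, two_smul, sub_eq_add_neg]

/-- `M ↦ (x ↦ M *ᵥ x)` on column vectors `x ∈ Q × Q`, which are a right `Q`-module. -/
noncomputable def Matrix.mulVecProdAlgHom (R : Type*) {Q : Type*} [CommRing R] [Ring Q]
    [Algebra R Q] : Matrix (Fin 2) (Fin 2) Q →ₐ[R] Module.End Qᵐᵒᵖ (Q × Q) where
  toFun M :=
    { toFun := fun x => (M 0 0 * x.1 + M 0 1 * x.2, M 1 0 * x.1 + M 1 1 * x.2)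
      map_add' := fun x y => by
        simp only [Prod.fst_add, Prod.snd_add, mul_add, Prod.mk_add_mk]
        congr 1 <;> abel
      map_smul' := fun q x => by
        simp only [Prod.smul_fst, Prod.smul_snd, MulOpposite.smul_eq_mul_unop, Prod.smul_mk,
          RingHom.id_apply, add_mul, mul_assoc] }
  map_one' := by ext <;> simp
  map_mul' M N := by
    ext <;> simp [Matrix.mul_apply, Fin.sum_univ_two, add_mul, mul_assoc]
  map_zero' := by ext <;> simp
  map_add' M N := by ext <;> simp [add_mul]
  commutes' r := by ext <;> simp [Algebra.smul_def, Matrix.algebraMap_eq_diagonal]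

namespace Module.End

variable {A k M : Type*} [Ring A] [Field k] [Algebra k A] [AddCommGroup M] [Module A M]
  [Module k M] [IsScalarTower k A M] {W U : Submodule A M} {s : Module.End A M}

theorem smul_eq_zero_of_apply_add_eq_smul (hWU : IsCompl W U) (hsW : ∀ w ∈ W, s w = -w)
    (hsU : ∀ u ∈ U, s u = u) {b : k} {w u : M} (hw : w ∈ W) (hu : u ∈ U)
    (h : s (w + u) = b • (w + u)) : (b + 1) • w = 0 ∧ (1 - b) • u = 0 := by
  rw [map_add, hsW w hw, hsU u hu, smul_add] at h
  have hwu : (b + 1) • w = (1 - b) • u := by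
    rw [add_smul, sub_smul, one_smul, one_smul]
    linear_combination (norm := abel) -h
  have h0 : (b + 1) • w = 0 := Submodule.disjoint_def.mp hWU.disjoint _
    (Submodule.smul_of_tower_mem _ _ hw) (hwu ▸ Submodule.smul_of_tower_mem _ _ hu)
  exact ⟨h0, hwu ▸ h0⟩

theorem mem_of_apply_eq_self (h2 : IsUnit (2 : A)) (hWU : IsCompl W U)
    (hsW : ∀ w ∈ W, s w = -w) (hsU : ∀ u ∈ U, s u = u) {x : M} (hx : s x = x) : x ∈ U := by
  obtain ⟨w, u, hw, hu, rfl⟩ := Submodule.codisjoint_iff_exists_add_eq.mp hWU.codisjoint x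
  rw [map_add, hsW w hw, hsU u hu] at hx
  have hw0 : (2 : A) • w = 0 := by rw [two_smul]; linear_combination (norm := abel) -hx
  rwa [h2.smul_eq_zero.mp hw0, zero_add]

theorem mem_of_apply_eq_neg (h2 : IsUnit (2 : A)) (hWU : IsCompl W U)
    (hsW : ∀ w ∈ W, s w = -w) (hsU : ∀ u ∈ U, s u = u) {x : M} (hx : s x = -x) : x ∈ W := by
  obtain ⟨w, u, hw, hu, rfl⟩ := Submodule.codisjoint_iff_exists_add_eq.mp hWU.codisjoint x
  rw [map_add, hsW w hw, hsU u hu] at hx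
  have hu0 : (2 : A) • u = 0 := by rw [two_smul]; linear_combination (norm := abel) hx
  rwa [h2.smul_eq_zero.mp hu0, add_zero]

theorem eq_zero_of_apply_eq_smul (hWU : IsCompl W U) (hsW : ∀ w ∈ W, s w = -w)
    (hsU : ∀ u ∈ U, s u = u) {b : k} (hb₁ : b ≠ 1) (hb₂ : b ≠ -1) {x : M} (hx : s x = b • x) :
    x = 0 := by
  obtain ⟨w, u, hw, hu, rfl⟩ := Submodule.codisjoint_iff_exists_add_eq.mp hWU.codisjoint x
  obtain ⟨h₁, h₂⟩ := smul_eq_zero_of_apply_add_eq_smul hWU hsW hsU hw hu hx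
  rw [smul_eq_zero] at h₁ h₂
  rw [h₁.resolve_left (fun h => hb₂ (by linear_combination h)),
    h₂.resolve_left (fun h => hb₁ (by linear_combination -h)), add_zero]

theorem apply_apply_of_lie_eq_smul {c : k} {e : Module.End A M} (h : ⁅s, e⁆ = c • e)
    (x : M) : s (e x) = e (s x) + c • e x := by
  have hx := LinearMap.congr_fun h x
  rw [Ring.lie_def, LinearMap.sub_apply, LinearMap.smul_apply, Module.End.mul_apply,
    Module.End.mul_apply] at hx
  exact sub_eq_iff_eq_add'.mp hx

theorem apply_sub_apply_of_lie_eq {e f : Module.End A M} (h : ⁅e, f⁆ = s) (x : M) :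
    e (f x) - f (e x) = s x := by
  rw [← h, Ring.lie_def, LinearMap.sub_apply, Module.End.mul_apply, Module.End.mul_apply]

variable [CharZero k]

theorem nonempty_linearEquiv_of_isScaledSl2Triple_two (hWU : IsCompl W U)
    (hsW : ∀ w ∈ W, s w = -w) (hsU : ∀ u ∈ U, s u = u) {e f : Module.End A M}
    (t : IsScaledSl2Triple (2 : k) s e f) : Nonempty (W ≃ₗ[A] U) := by
  have h2 : IsUnit (2 : A) := by
    simpa only [map_ofNat] using (IsUnit.mk0 (2 : k) two_ne_zero).map (algebraMap k A)
  have heW : ∀ w ∈ W, e w ∈ U := fun w hw => mem_of_apply_eq_self h2 hWU hsW hsU <| by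
    rw [apply_apply_of_lie_eq_smul t.lie_h_e, hsW w hw, map_neg, two_smul]; abel
  have hfU : ∀ u ∈ U, f u ∈ W := fun u hu => mem_of_apply_eq_neg h2 hWU hsW hsU <| by
    rw [apply_apply_of_lie_eq_smul t.lie_h_f, hsU u hu, neg_smul, two_smul]; abel
  have heU : ∀ u ∈ U, e u = 0 := fun u hu =>
    eq_zero_of_apply_eq_smul hWU hsW hsU (b := (3 : k)) (by norm_num) (by norm_num) <| by
      rw [apply_apply_of_lie_eq_smul t.lie_h_e, hsU u hu]; module
  have hfW : ∀ w ∈ W, f w = 0 := fun w hw =>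
    eq_zero_of_apply_eq_smul hWU hsW hsU (b := (-3 : k)) (by norm_num) (by norm_num) <| by
      rw [apply_apply_of_lie_eq_smul t.lie_h_f, hsW w hw, map_neg]; module
  refine ⟨LinearEquiv.ofLinearMap (e.restrict heW) (f.restrict hfU) ?_ ?_⟩
  · ext ⟨u, hu⟩
    simpa [heU u hu, hsU u hu] using apply_sub_apply_of_lie_eq t.lie_e_f u
  · ext ⟨w, hw⟩
    simpa [hfW w hw, hsW w hw] using apply_sub_apply_of_lie_eq t.lie_e_f w

theorem nonempty_linearEquiv_or_eq_bot_of_isScaledSl2Triple (hWU : IsCompl W U)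
    (hsW : ∀ w ∈ W, s w = -w) (hsU : ∀ u ∈ U, s u = u) {c : k} (hc : c ≠ 0)
    {e f : Module.End A M} (t : IsScaledSl2Triple c s e f) :
    Nonempty (W ≃ₗ[A] U) ∨ W = ⊥ := by
  by_cases hc₂ : c = 2
  · exact .inl (nonempty_linearEquiv_of_isScaledSl2Triple_two hWU hsW hsU (hc₂ ▸ t))
  by_cases hc₂' : c = -2
  · have t' : IsScaledSl2Triple (2 : k) s f (-e) := by simpa [hc₂'] using t.neg_swap
    exact .inl (nonempty_linearEquiv_of_isScaledSl2Triple_two hWU hsW hsU t')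
  refine .inr ((Submodule.eq_bot_iff W).mpr fun w hw => ?_)
  have he : e w = 0 := eq_zero_of_apply_eq_smul hWU hsW hsU (b := c - 1)
    (fun h => hc₂ (by linear_combination h)) (fun h => hc (by linear_combination h)) <| by
      rw [apply_apply_of_lie_eq_smul t.lie_h_e, hsW w hw, map_neg]; module
  have hf : f w = 0 := eq_zero_of_apply_eq_smul hWU hsW hsU (b := -c - 1)
    (fun h => hc₂' (by linear_combination -h)) (fun h => hc (by linear_combination -h)) <| by
      rw [apply_apply_of_lie_eq_smul t.lie_h_f, hsW w hw, map_neg]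
      module
  simpa [he, hf, hsW w hw] using apply_sub_apply_of_lie_eq t.lie_e_f w

end Module.End

theorem AddMonoidAlgebra.isUnit_single_one {R G : Type*} [Semiring R] [AddGroup G] (g : G) :
    IsUnit (AddMonoidAlgebra.single g (1 : R)) := by
  simpa only [AddMonoidAlgebra.of_apply, toAdd_ofAdd] using
    (Group.isUnit (Multiplicative.ofAdd g)).map (AddMonoidAlgebra.of R G)

instance MulOpposite.moduleFree_self (Q : Type*) [Ring Q] : Module.Free Qᵐᵒᵖ Q :=
  Module.Free.of_equiv (MulOpposite.opLinearEquiv Qᵐᵒᵖ).symm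

theorem mMap_surjective {Q : Type*} [Ring Q] {i j : Q} (hij : i * j = -(j * i))
    (hi : IsUnit i) (hj : IsUnit j) (h2 : IsUnit (2 : Q)) : Function.Surjective (mMap Q i j) := by
  obtain ⟨u, hu⟩ := h2.mul (hi.mul hj)
  intro q
  refine ⟨((1 + j) * ↑u⁻¹ * q, (1 + i) * ↑u⁻¹ * q), ?_⟩
  calc (1 + i) * ((1 + j) * ↑u⁻¹ * q) - (1 + j) * ((1 + i) * ↑u⁻¹ * q)
      = (i * j - j * i) * ↑u⁻¹ * q := by noncomm_ring
    _ = ↑u * ↑u⁻¹ * q := by rw [hu, hij]; noncomm_ring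
    _ = q := by rw [Units.mul_inv, one_mul]

theorem S_P_not_R_conjugate_general
    (k : Type*) [Field k] [CharZero k]
    (Q : Type*) [Ring Q] [Algebra (LaurentR k) Q]
    [Algebra k Q] [IsScalarTower k (LaurentR k) Q]
    (i j : Q)
    (hi : i * i = algebraMap (LaurentR k) Q (tOne k))
    (hj : j * j = algebraMap (LaurentR k) Q (tTwo k))
    (hij : i * j = -(j * i))
    -- `W = ker m` is not free, `U` is a complement of `W`:
    (hWnotfree : ¬ Module.Free Qᵐᵒᵖ (LinearMap.ker (mMap Q i j)))
    (U : Submodule Qᵐᵒᵖ (Q × Q))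
    (hWU : IsCompl (LinearMap.ker (mMap Q i j)) U)
    -- `s` acts as `−1` on `W`, `+1` on `U`, with matrix `S`:
    (s : (Q × Q) →ₗ[Qᵐᵒᵖ] (Q × Q))
    (hsW : ∀ w ∈ LinearMap.ker (mMap Q i j), s w = -w)
    (hsU : ∀ u ∈ U, s u = u)
    (S : Matrix (Fin 2) (Fin 2) Q)
    (hSmat : ∀ u v : Q, s (u, v) = (S 0 0 * u + S 0 1 * v, S 1 0 * u + S 1 1 * v))
    -- `P = a · diag(1,−1)` with `a ∈ k^×`:
    (a : k) (ha : a ≠ 0)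
    (P : Matrix (Fin 2) (Fin 2) Q)
    (hPmat : P = !![algebraMap k Q a, 0; 0, -(algebraMap k Q a)])
    (hS : S ∈ LieAlgebra.derivedSeries (LaurentR k) (Matrix (Fin 2) (Fin 2) Q) 1)
    (hP : P ∈ LieAlgebra.derivedSeries (LaurentR k) (Matrix (Fin 2) (Fin 2) Q) 1) :
    ∀ φ : (LieAlgebra.derivedSeries (LaurentR k) (Matrix (Fin 2) (Fin 2) Q) 1) ≃ₗ⁅LaurentR k⁆
          (LieAlgebra.derivedSeries (LaurentR k) (Matrix (Fin 2) (Fin 2) Q) 1),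
      φ ⟨P, hP⟩ ≠ ⟨S, hS⟩ := by
  intro φ hφ
  have tP : IsScaledSl2Triple (algebraMap k (LaurentR k) (a * 2)) P
      (algebraMap k (LaurentR k) a • !![0, 1; 0, 0]) !![0, 0; 1, 0] := by
    convert Matrix.isScaledSl2Triple_standard.smul (algebraMap k (LaurentR k) a) using 1
    · rw [map_mul, map_ofNat]
    · ext i j
      fin_cases i <;> fin_cases j <;> simp [hPmat, Algebra.algebraMap_eq_smul_one]
  obtain ⟨he, hf⟩ := tP.mem_derivedSeries <|
    (IsUnit.mk0 _ (mul_ne_zero ha two_ne_zero)).map (algebraMap k (LaurentR k))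
  have tS := tP.map_lieIdeal φ.toLieHom hP he hf
  rw [LieEquiv.coe_toLieHom, hφ] at tS
  have hs : Matrix.mulVecProdAlgHom k S = s := LinearMap.ext fun x => (hSmat x.1 x.2).symm
  have ts := tS.of_algebraMap.map (Matrix.mulVecProdAlgHom k).toLieHom
  simp only [AlgHom.toLieHom_apply, hs] at ts
  have hsurj : Function.Surjective (mMap Q i j) := mMap_surjective hij
    (isUnit_mul_self_iff.mp (hi ▸ (AddMonoidAlgebra.isUnit_single_one _).map _))
    (isUnit_mul_self_iff.mp (hj ▸ (AddMonoidAlgebra.isUnit_single_one _).map _))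
    (by simpa only [map_ofNat] using (IsUnit.mk0 (2 : k) two_ne_zero).map (algebraMap k Q))
  rcases Module.End.nonempty_linearEquiv_or_eq_bot_of_isScaledSl2Triple hWU hsW hsU
    (mul_ne_zero ha two_ne_zero) ts with ⟨⟨e⟩⟩ | hbot
  · exact hWnotfree <| .of_equiv <| (e ≪≫ₗ (Submodule.quotientEquivOfIsCompl _ _ hWU).symm
      ≪≫ₗ LinearMap.quotKerEquivOfSurjective _ hsurj).symm
  · rw [hbot] at hWnotfree
    exact hWnotfree inferInstance

/-- Let `Q = (t₁,t₂)` be the quaternion algebra over `R = k[t₁^{±1},t₂^{±1}]`, let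
`S ∈ sl₂(Q)` be the matrix of the `Q`-linear endomorphism of `V = Q²` acting as `−1` on
the non-free rank-one projective module `W = ker(m)` and as `+1` on a free complement `U`,
and let `P = a·diag(1,−1)` with `a ∈ k^×`.  Then `S` and `P` are not conjugate by any
`R`-linear Lie algebra automorphism of `sl₂(Q) = [gl₂(Q), gl₂(Q)]`. -/
theorem S_P_not_R_conjugate
    (k : Type*) [Field k] [IsAlgClosed k] [CharZero k]
    (Q : Type*) [Ring Q] [Algebra (LaurentR k) Q]
    [Algebra k Q] [IsScalarTower k (LaurentR k) Q]
    (i j : Q)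
    (hi : i * i = algebraMap (LaurentR k) Q (tOne k))
    (hj : j * j = algebraMap (LaurentR k) Q (tTwo k))
    (hij : i * j = -(j * i))
    (bQ : Module.Basis (Fin 4) (LaurentR k) Q)
    (hb0 : bQ 0 = 1) (hb1 : bQ 1 = i) (hb2 : bQ 2 = j) (hb3 : bQ 3 = i * j)
    -- `W = ker m` is not free, `U` is a complement of `W`:
    (hWnotfree : ¬ Module.Free Qᵐᵒᵖ (LinearMap.ker (mMap Q i j)))
    (U : Submodule Qᵐᵒᵖ (Q × Q))
    (hWU : IsCompl (LinearMap.ker (mMap Q i j)) U)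
    -- `s` acts as `−1` on `W`, `+1` on `U`, with matrix `S`:
    (s : (Q × Q) →ₗ[Qᵐᵒᵖ] (Q × Q))
    (hsW : ∀ w ∈ LinearMap.ker (mMap Q i j), s w = -w)
    (hsU : ∀ u ∈ U, s u = u)
    (S : Matrix (Fin 2) (Fin 2) Q)
    (hSmat : ∀ u v : Q, s (u, v) = (S 0 0 * u + S 0 1 * v, S 1 0 * u + S 1 1 * v))
    -- `P = a · diag(1,−1)` with `a ∈ k^×`:
    (a : k) (ha : a ≠ 0)
    (P : Matrix (Fin 2) (Fin 2) Q)
    (hPmat : P = !![algebraMap k Q a, 0; 0, -(algebraMap k Q a)])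
    (hS : S ∈ LieAlgebra.derivedSeries (LaurentR k) (Matrix (Fin 2) (Fin 2) Q) 1)
    (hP : P ∈ LieAlgebra.derivedSeries (LaurentR k) (Matrix (Fin 2) (Fin 2) Q) 1) :
    ∀ φ : (LieAlgebra.derivedSeries (LaurentR k) (Matrix (Fin 2) (Fin 2) Q) 1) ≃ₗ⁅LaurentR k⁆
          (LieAlgebra.derivedSeries (LaurentR k) (Matrix (Fin 2) (Fin 2) Q) 1),
      φ ⟨P, hP⟩ ≠ ⟨S, hS⟩ :=
  S_P_not_R_conjugate_general k Q i j hi hj hij hWnotfree U hWU s hsW hsU S hSmat a ha P hPmat hS hP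
end
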